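/- arXiv:2401.13196 — 4 statements merged into one kernel-verified Lean document; each statement's English description precedes it below -/
import Mathlib

section
/- Let e be a 3×3 real matrix and b = I + 2·e, let J, λ, μ₁, μ₂ be real numbers, and write I₁(A) = trace(A). Then (λ/2)·(J² − 1)·I + μ₁·(b − I) + μ₂·(I₁(b)·b − 2·I − b·b) = (λ/2)·(J − 1)·((J − 1) + 2)·I + 2·(μ₁ + 2·μ₂)·e + 2·μ₂·(I₁(e)·I − e)·b. -/
/-!
Expanding `b = 1 + 2e` and `I₁(b) = 3 + 2 I₁(e)` turns both sides into the same linear combination of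
`1`, `e`, `I₁(e) e` and `e²`; the only scalar identity needed is `J² - 1 = (J - 1)((J - 1) + 2)`.
-/

theorem trace_one_add_two_smul_fin_three {R : Type*} [CommRing R] (e : Matrix (Fin 3) (Fin 3) R) :
    (1 + (2 : R) • e).trace = 3 + 2 * e.trace := by
  rw [Matrix.trace_add, Matrix.trace_smul, Matrix.trace_one, Fintype.card_fin, smul_eq_mul]
  norm_num

/-- The `μ₂` term of the Mooney-Rivlin stress, with `t = I₁(e)`. -/
theorem smul_sub_two_sub_mul_self_of_eq_one_add_two_smul {R A : Type*} [CommRing R] [Ring A]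
    [Algebra R A] {e b : A} (hb : b = 1 + (2 : R) • e) (t : R) :
    (3 + 2 * t) • b - (2 : R) • (1 : A) - b * b = (4 : R) • e + (2 : R) • ((t • (1 : A) - e) * b) := by
  subst hb
  simp only [mul_add, add_mul, sub_mul, one_mul, mul_one, smul_mul_assoc, mul_smul_comm, smul_add,
    smul_sub, smul_smul]
  module

theorem stmt_10 (e b : Matrix (Fin 3) (Fin 3) ℝ)
    (hb : b = 1 + (2 : ℝ) • e)
    (J lam mu₁ mu₂ : ℝ)
    (I₁ : Matrix (Fin 3) (Fin 3) ℝ → ℝ)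
    (hI₁ : ∀ A, I₁ A = Matrix.trace A) :
    (lam / 2 * (J ^ 2 - 1)) • (1 : Matrix (Fin 3) (Fin 3) ℝ) + mu₁ • (b - 1)
        + mu₂ • (I₁ b • b - (2 : ℝ) • (1 : Matrix (Fin 3) (Fin 3) ℝ) - b * b)
      = (lam / 2 * ((J - 1) * ((J - 1) + 2))) • (1 : Matrix (Fin 3) (Fin 3) ℝ)
        + (2 * (mu₁ + 2 * mu₂)) • e
        + (2 * mu₂) • ((I₁ e • (1 : Matrix (Fin 3) (Fin 3) ℝ) - e) * b) := by
  have hb_sub : b - 1 = (2 : ℝ) • e := by rw [hb, add_sub_cancel_left]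
  have htrace : b.trace = 3 + 2 * e.trace := hb ▸ trace_one_add_two_smul_fin_three e
  rw [hI₁ b, hI₁ e, htrace, hb_sub,
    smul_sub_two_sub_mul_self_of_eq_one_add_two_smul hb]
  module
end

section
/- Let E be a 3×3 real matrix such that C = I + 2·E is invertible, and write I₁(A) = trace(A), I₂(A) = (1/2)·((trace A)² − trace(A·A)). Then I₁(C)·I − C − (2/3)·I₂(C)·C⁻¹ = 2·(I₁(E)·I − E) + 4·C⁻¹·(E − (2/3)·I₁(E)·I − (2/3)·I₂(E)·I). -/
/-! Since `C⁻¹ * C = 1` with `C = 1 + 2E`, the matrix `C⁻¹` enters the right-hand side only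
through `C⁻¹ * (2 • E) = 1 - C⁻¹`, after which both sides are the same linear combination of `1`,
`C` and `C⁻¹`, for any values of the scalars standing in for `I₁ E` and `I₂ E`. The invariants of `C` are then expressed through
those of `E` by expanding the traces of `1 + 2E` and `(1 + 2E)²`. -/

namespace Matrix

variable {n R : Type*} [Fintype n] [DecidableEq n]

theorem trace_one_add_smul [CommRing R] (a : R) (E : Matrix n n R) :
    trace (1 + a • E) = Fintype.card n + a * trace E := by
  simp [trace_add, trace_smul]

theorem trace_mul_self_one_add_smul [CommRing R] (a : R) (E : Matrix n n R) :
    trace ((1 + a • E) * (1 + a • E))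
      = Fintype.card n + 2 * a * trace E + a ^ 2 * trace (E * E) := by
  simp only [add_mul, mul_add, one_mul, mul_one, smul_mul, Matrix.mul_smul, trace_add, trace_smul,
    trace_one, smul_smul, smul_eq_mul]
  ring

theorem half_sq_trace_sub_trace_mul_self_one_add_smul [Field R] [CharZero R] (a : R) (E : Matrix n n R) :
    (1 / 2 : R) * (trace (1 + a • E) ^ 2 - trace ((1 + a • E) * (1 + a • E)))
      = (1 / 2 : R) * ((Fintype.card n) ^ 2 - Fintype.card n)
        + a * (Fintype.card n - 1) * trace E
        + a ^ 2 * ((1 / 2 : R) * (trace E ^ 2 - trace (E * E))) := by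
  rw [trace_one_add_smul, trace_mul_self_one_add_smul]
  ring

theorem inv_mul_smul_eq_one_sub_inv [CommRing R] (a : R) (E : Matrix n n R)
    (hC : IsUnit (1 + a • E)) :
    a • ((1 + a • E)⁻¹ * E) = 1 - (1 + a • E)⁻¹ := by
  have h := nonsing_inv_mul (1 + a • E) ((isUnit_iff_isUnit_det _).mp hC)
  rw [mul_add, mul_one, Matrix.mul_smul] at h
  exact eq_sub_of_add_eq' h

theorem mooneyRivlin_stress_eq_stable [Field R] [CharZero R] (E : Matrix n n R)
    (hC : IsUnit (1 + (2 : R) • E)) (t s : R) :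
    (3 + 2 * t) • (1 : Matrix n n R) - (1 + (2 : R) • E)
        - (2 / 3 * (3 + 4 * t + 4 * s)) • (1 + (2 : R) • E)⁻¹
      = (2 : R) • (t • (1 : Matrix n n R) - E)
        + (4 : R) • ((1 + (2 : R) • E)⁻¹ * (E - (2 / 3 * t) • (1 : Matrix n n R)
            - (2 / 3 * s) • (1 : Matrix n n R))) := by
  have h := inv_mul_smul_eq_one_sub_inv (2 : R) E hC
  set D := (1 + (2 : R) • E)⁻¹
  have hD : (4 : R) • (D * E) = (2 : R) • (1 - D) := by
    rw [← h, smul_smul]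
    norm_num
  simp only [mul_sub, Matrix.mul_smul, mul_one, smul_sub, hD]
  module

end Matrix

theorem stmt_13 (E C : Matrix (Fin 3) (Fin 3) ℝ)
    (hC : C = 1 + (2 : ℝ) • E) (hCinv : IsUnit C)
    (I₁ I₂ : Matrix (Fin 3) (Fin 3) ℝ → ℝ)
    (hI₁ : ∀ A, I₁ A = Matrix.trace A)
    (hI₂ : ∀ A, I₂ A = (1 / 2 : ℝ) * ((Matrix.trace A) ^ 2 - Matrix.trace (A * A))) :
    I₁ C • (1 : Matrix (Fin 3) (Fin 3) ℝ) - C - (2 / 3 * I₂ C) • C⁻¹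
      = (2 : ℝ) • (I₁ E • (1 : Matrix (Fin 3) (Fin 3) ℝ) - E)
        + (4 : ℝ) • (C⁻¹ * (E - (2 / 3 * I₁ E) • (1 : Matrix (Fin 3) (Fin 3) ℝ)
            - (2 / 3 * I₂ E) • (1 : Matrix (Fin 3) (Fin 3) ℝ))) := by
  subst hC
  have hI₁C : I₁ (1 + (2 : ℝ) • E) = 3 + 2 * I₁ E := by
    rw [hI₁, hI₁, Matrix.trace_one_add_smul, Fintype.card_fin, Nat.cast_ofNat]
  have hI₂C : I₂ (1 + (2 : ℝ) • E) = 3 + 4 * I₁ E + 4 * I₂ E := by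
    rw [hI₂, hI₂, hI₁, Matrix.half_sq_trace_sub_trace_mul_self_one_add_smul, Fintype.card_fin]
    norm_num
  rw [hI₁C, hI₂C]
  exact Matrix.mooneyRivlin_stress_eq_stable E hCinv (I₁ E) (I₂ E)
end

section
/- Fix N : ℕ, real parameters μ_j and α_j for j = 1,…,N, and positive reals λ₂, λ₃. Define ψ(λ₁) = Σ_{j=1}^{N} (μ_j/α_j)·((λ₁^{α_j} + λ₂^{α_j} + λ₃^{α_j})·(λ₁·λ₂·λ₃)^{−α_j/3} − 3) for λ₁ > 0, where all α_j ≠ 0. Then for every λ₁ > 0, ψ is differentiable at λ₁ and (1/λ₁)·ψ′(λ₁) = (1/λ₁²)·Σ_{j=1}^{N} (μ_j/3)·(2·(λ₁^{α_j} − 1) − (λ₂^{α_j} − 1) − (λ₃^{α_j} − 1))·(λ₁·λ₂·λ₃)^{−α_j/3}. -/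
theorem stmt_15 (N : ℕ) (μ α : ℕ → ℝ) (hα : ∀ j ∈ Finset.range N, α j ≠ 0)
    (l2 l3 : ℝ) (hl2 : 0 < l2) (hl3 : 0 < l3)
    (ψ : ℝ → ℝ)
    (hψ : ∀ l1 : ℝ, 0 < l1 → ψ l1 = ∑ j ∈ Finset.range N,
      μ j / α j * ((l1 ^ α j + l2 ^ α j + l3 ^ α j) * (l1 * l2 * l3) ^ (-(α j) / 3) - 3)) :
    ∀ l1 : ℝ, 0 < l1 → DifferentiableAt ℝ ψ l1 ∧
      1 / l1 * deriv ψ l1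
        = 1 / l1 ^ 2 * ∑ j ∈ Finset.range N,
            μ j / 3 * (2 * (l1 ^ α j - 1) - (l2 ^ α j - 1) - (l3 ^ α j - 1))
              * (l1 * l2 * l3) ^ (-(α j) / 3) := by
  intro l1 hl1
  set K : ℕ → ℝ := fun j => (l2 * l3) ^ (-(α j) / 3) with hK
  set F : ℝ → ℝ := fun x => ∑ j ∈ Finset.range N,
      μ j / α j * ((x ^ α j + l2 ^ α j + l3 ^ α j) * x ^ (-(α j) / 3) * K j - 3) with hF
  set D : ℕ → ℝ := fun j =>
      μ j / α j * (((α j * l1 ^ (α j - 1)) * l1 ^ (-(α j) / 3)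
        + (l1 ^ α j + l2 ^ α j + l3 ^ α j) * ((-(α j) / 3) * l1 ^ (-(α j) / 3 - 1))) * K j)
      with hD
  have hFeq : ∀ x ∈ Set.Ioi (0:ℝ), ψ x = F x := by
    intro x hx
    rw [hψ x hx, hF]
    refine Finset.sum_congr rfl fun j hj => ?_
    rw [mul_assoc x l2 l3, Real.mul_rpow (le_of_lt hx) (by positivity)]
    ring
  have hev : ψ =ᶠ[nhds l1] F :=
    Filter.eventuallyEq_of_mem (isOpen_Ioi.mem_nhds hl1) hFeq
  have hDF : HasDerivAt F (∑ j ∈ Finset.range N, D j) l1 := by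
    apply HasDerivAt.fun_sum
    intro j hj
    have h1 : HasDerivAt (fun x : ℝ => x ^ α j) (α j * l1 ^ (α j - 1)) l1 :=
      Real.hasDerivAt_rpow_const (Or.inl hl1.ne')
    have h2 : HasDerivAt (fun x : ℝ => x ^ (-(α j) / 3)) ((-(α j) / 3) * l1 ^ (-(α j) / 3 - 1)) l1 :=
      Real.hasDerivAt_rpow_const (Or.inl hl1.ne')
    have hg := ((h1.add_const (l2 ^ α j + l3 ^ α j)).mul h2)
    have := ((hg.mul_const (K j)).sub_const 3).const_mul (μ j / α j)
    convert this using 1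
    · rfl
    · funext x; simp only [Pi.mul_apply]; ring_nf
    · rw [hD]; ring_nf
  have hDψ : HasDerivAt ψ (∑ j ∈ Finset.range N, D j) l1 := hDF.congr_of_eventuallyEq hev
  refine ⟨hDψ.differentiableAt, ?_⟩
  rw [hDψ.deriv, Finset.mul_sum, Finset.mul_sum]
  refine Finset.sum_congr rfl fun j hj => ?_
  have ha := hα j hj
  have hsub1 : l1 ^ (α j - 1) = l1 ^ α j / l1 := by
    rw [Real.rpow_sub hl1, Real.rpow_one]
  have hsub2 : l1 ^ (-(α j) / 3 - 1) = l1 ^ (-(α j) / 3) / l1 := by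
    rw [Real.rpow_sub hl1, Real.rpow_one]
  simp only [hD, hK]
  rw [hsub1, hsub2, mul_assoc l1 l2 l3,
    Real.mul_rpow (le_of_lt hl1) (by positivity : (0:ℝ) ≤ l2 * l3)]
  field_simp
  ring
end

section
/- For every real x with x > −1, log(1 + x) − x = −x²/(2 + x) + 2 · Σ_{n=1}^{∞} (1/(2n+1)) · (x/(2+x))^{2n+1}, where the series on the right converges. -/
/-!
With `y = x / (2 + x)` one has `|y| < 1` and `(1 + y) / (1 - y) = 1 + x`, so the artanh series
`log (1 + y) - log (1 - y) = 2 ∑ y ^ (2n+1) / (2n+1)` computes `log (1 + x)`. Its `n = 0` term `2y`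
cancels against `x` up to `-x² / (2 + x)`, and what remains is the tail `n ≥ 1`.
-/

open Real

theorem Real.hasSum_log_sub_log_tail_of_abs_lt_one {y : ℝ} (hy : |y| < 1) :
    HasSum (fun n : ℕ => 1 / (2 * ((n : ℝ) + 1) + 1) * y ^ (2 * (n + 1) + 1))
      ((log (1 + y) - log (1 - y)) / 2 - y) := by
  have htail := (hasSum_nat_add_iff' 1).mpr (hasSum_log_sub_log_of_abs_lt_one hy)
  have hterm : (fun n : ℕ => 1 / (2 * ((n : ℝ) + 1) + 1) * y ^ (2 * (n + 1) + 1))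
      = fun n : ℕ => 2 * (1 / (2 * ((n + 1 : ℕ) : ℝ) + 1)) * y ^ (2 * (n + 1) + 1) / 2 := by
    funext n
    push_cast
    ring
  have hvalue : (log (1 + y) - log (1 - y)) / 2 - y
      = (log (1 + y) - log (1 - y)
          - ∑ k ∈ Finset.range 1, 2 * (1 / (2 * (k : ℝ) + 1)) * y ^ (2 * k + 1)) / 2 := by
    simp only [Finset.range_one, Finset.sum_singleton]
    ring
  rw [hterm, hvalue]
  exact htail.div_const 2

theorem abs_div_two_add_lt_one {x : ℝ} (hx : -1 < x) : |x / (2 + x)| < 1 := by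
  have h2x : 0 < 2 + x := by linarith
  rw [abs_div, abs_of_pos h2x, div_lt_one h2x, abs_lt]
  constructor <;> linarith

theorem log_one_add_div_two_add_sub_log_one_sub {x : ℝ} (hx : -1 < x) :
    log (1 + x / (2 + x)) - log (1 - x / (2 + x)) = log (1 + x) := by
  have h2x : 2 + x ≠ 0 := by linarith
  obtain ⟨hlo, hhi⟩ := abs_lt.mp (abs_div_two_add_lt_one hx)
  rw [← log_div (by linarith) (by linarith)]
  congr 1
  field_simp
  ring

theorem stmt_17 (x : ℝ) (hx : -1 < x) :
    Summable (fun n : ℕ => 1 / (2 * ((n : ℝ) + 1) + 1) * (x / (2 + x)) ^ (2 * (n + 1) + 1)) ∧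
    Real.log (1 + x) - x
      = -x ^ 2 / (2 + x)
        + 2 * ∑' n : ℕ, 1 / (2 * ((n : ℝ) + 1) + 1) * (x / (2 + x)) ^ (2 * (n + 1) + 1) := by
  have hsum := hasSum_log_sub_log_tail_of_abs_lt_one (abs_div_two_add_lt_one hx)
  rw [log_one_add_div_two_add_sub_log_one_sub hx] at hsum
  refine ⟨hsum.summable, ?_⟩
  have h2x : 2 + x ≠ 0 := by linarith
  rw [hsum.tsum_eq]
  field_simp
  ring
end
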